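/- The extended instance I'_{3,3}(B) is a dual market: setting R_1 = {x_{4i+r}} ∪ {p_j^s : 1≤s≤3} ∪ {q_j} ∪ {u^s_{4i+r} : s ∈ {1,3,5}} and R_2 = {k_{4i+r}} ∪ {p_j^s : 4≤s≤6} ∪ {t_j} ∪ {u^s_{4i+r} : s ∈ {2,4}}, and A_1 = {y_{4i+r}} ∪ {z_j^1} ∪ {c_j^s : 1≤s≤3} ∪ {h^s_{4i+r} : s ∈ {1,3}} and A_2 = {l_{4i+r}} ∪ {z_j^s : 2≤s≤5} ∪ {h^s_{4i+r} : s ∈ {2,4}}, the sets R_1, R_2 partition the residents of I'_{3,3}(B), the sets A_1, A_2 partition its hospitals, and every mutually acceptable resident–hospital pair of I'_{3,3}(B) lies in R_1 × A_1 or in R_2 × A_2. -/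

import Mathlib

/-- A one-to-one HRC instance: residents are partitioned into single residents and
ordered couples; all hospitals have capacity 1. -/
structure HRC1 (R H : Type) where
  singles : List R
  couples : List (R × R)
  singlePref : R → List H
  couplePref : R × R → List (H × H)
  hospPref : H → List R

namespace HRC1

/-- `x` precedes `y` on the strict preference list `l`. -/
def Prefers {α : Type} [DecidableEq α] (l : List α) (x y : α) : Prop :=
  x ∈ l ∧ y ∈ l ∧ l.idxOf x < l.idxOf y

variable {R H : Type} [DecidableEq R] [DecidableEq H]

/-- `M` is a matching of the instance `I`. -/
def IsMatching (I : HRC1 R H) (M : R → Option H) : Prop :=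
  (∀ r₁ r₂ h, M r₁ = some h → M r₂ = some h → r₁ = r₂) ∧
  (∀ r ∈ I.singles, ∀ h, M r = some h → h ∈ I.singlePref r) ∧
  (∀ c ∈ I.couples,
    (M c.1 = none ∧ M c.2 = none) ∨
    ∃ hp ∈ I.couplePref c, M c.1 = some hp.1 ∧ M c.2 = some hp.2) ∧
  (∀ r, (M r).isSome → r ∈ I.singles ∨ ∃ c ∈ I.couples, r = c.1 ∨ r = c.2)

/-- Hospital `h` is unmatched in `M`. -/
def HospFree (M : R → Option H) (h : H) : Prop := ∀ r, M r ≠ some h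

/-- Hospital `h` is unmatched in `M`, or prefers `r` to its current assignee. -/
def HospOpenFor (I : HRC1 R H) (M : R → Option H) (h : H) (r : R) : Prop :=
  HospFree M h ∨ ∃ r', M r' = some h ∧ Prefers (I.hospPref h) r r'

/-- Blocking pair consisting of a single resident `r` and a hospital `h`. -/
def BlockSingle (I : HRC1 R H) (M : R → Option H) (r : R) (h : H) : Prop :=
  r ∈ I.singles ∧ h ∈ I.singlePref r ∧
  (M r = none ∨ ∃ h', M r = some h' ∧ Prefers (I.singlePref r) h h') ∧
  I.HospOpenFor M h r

/-- Blocking pair consisting of a couple `c` and a pair of hospitals `hp` on its joint list. -/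
def BlockCouple (I : HRC1 R H) (M : R → Option H) (c : R × R) (hp : H × H) : Prop :=
  c ∈ I.couples ∧ hp ∈ I.couplePref c ∧
  ((M c.1 = none ∧ M c.2 = none) ∨
    ∃ hp' ∈ I.couplePref c, M c.1 = some hp'.1 ∧ M c.2 = some hp'.2 ∧
      Prefers (I.couplePref c) hp hp') ∧
  (M c.1 = some hp.1 ∨ I.HospOpenFor M hp.1 c.1) ∧
  (M c.2 = some hp.2 ∨ I.HospOpenFor M hp.2 c.2)

/-- `M` is a stable matching of the instance `I`. -/
def Stable (I : HRC1 R H) (M : R → Option H) : Prop :=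
  I.IsMatching M ∧ (∀ r h, ¬ I.BlockSingle M r h) ∧ (∀ c hp, ¬ I.BlockCouple M c hp)

end HRC1

/-- An instance of (2,2)-E3-SAT: `m` clauses, each with exactly 3 literals over `n`
variables (a literal is a variable together with a polarity, `true` for positive);
`occ l` enumerates the two occurrences of the literal `l`, so that each of the literals
`vᵢ` and `¬vᵢ` appears exactly twice. -/
structure E3SAT (n m : ℕ) where
  clause : Fin m → Fin 3 → Fin n × Bool
  occ : Fin n × Bool → Fin 2 → Fin m × Fin 3
  occ_spec : ∀ l r, clause (occ l r).1 (occ l r).2 = l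
  occ_inj : ∀ l, occ l 0 ≠ occ l 1
  occ_surj : ∀ j s, ∃ r, occ (clause j s) r = (j, s)

namespace E3SAT

variable {n m : ℕ}

/-- `B` is satisfiable. -/
def Satisfiable (B : E3SAT n m) : Prop :=
  ∃ f : Fin n → Bool, ∀ j : Fin m, ∃ s : Fin 3, f (B.clause j s).1 = (B.clause j s).2

/-- The index (`0` or `1`) of the occurrence of its literal that position `s` of
clause `j` constitutes. -/
def rIdx (B : E3SAT n m) (j : Fin m) (s : Fin 3) : Fin 2 :=
  if B.occ (B.clause j s) 0 = (j, s) then 0 else 1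

end E3SAT

/-- Residents of the extended instance `I′₃₃(B)`: `X i r = x_{4i+r}`, `K i r = k_{4i+r}`,
`P j s = p_j^{s+1}`, `Q j = q_{j+1}`, `T j = t_{j+1}`, `U i r s = u^{s+1}_{4i+r}`
(0-based indices). -/
inductive Res3E (n m : ℕ)
  | X (i : Fin n) (r : Fin 4)
  | K (i : Fin n) (r : Fin 4)
  | P (j : Fin m) (s : Fin 6)
  | Q (j : Fin m)
  | T (j : Fin m)
  | U (i : Fin n) (r : Fin 4) (s : Fin 5)
deriving DecidableEq

/-- Hospitals of the extended instance `I′₃₃(B)`: `Y i r = y_{4i+r}`, `L i r = l_{4i+r}`,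
`C j s = c_j^{s+1}`, `Z j r = z_j^{r+1}`, `Hh i r s = h^{s+1}_{4i+r}` (0-based indices). -/
inductive Hos3E (n m : ℕ)
  | Y (i : Fin n) (r : Fin 4)
  | L (i : Fin n) (r : Fin 4)
  | C (j : Fin m) (s : Fin 3)
  | Z (j : Fin m) (r : Fin 5)
  | Hh (i : Fin n) (r : Fin 4) (s : Fin 4)
deriving DecidableEq

variable {n m : ℕ}

/-- The hospital `c(x_{4i+r})`: for `r ∈ {0,1}` the clause hospital of the `(r+1)`-th
occurrence of `vᵢ`; for `r ∈ {2,3}` that of the `(r−1)`-th occurrence of `¬vᵢ`. -/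
def cX (B : E3SAT n m) (i : Fin n) (r : Fin 4) : Hos3E n m :=
  have hr := r.isLt
  let o := B.occ (i, decide (r.val < 2)) ⟨r.val % 2, by omega⟩
  Hos3E.C o.1 o.2

/-- The resident `x(c_j^{s+1})` corresponding to the literal at position `s` of
clause `c_j`. -/
def xOfC (B : E3SAT n m) (j : Fin m) (s : Fin 3) : Res3E n m :=
  let l := B.clause j s
  have hv : (B.rIdx j s).val < 2 := (B.rIdx j s).isLt
  if l.2 then Res3E.X l.1 ⟨(B.rIdx j s).val, by omega⟩
  else Res3E.X l.1 ⟨(B.rIdx j s).val + 2, by omega⟩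

/-- The extended one-to-one HRC instance `I′₃₃(B)` constructed from the
(2,2)-E3-SAT instance `B`. -/
def instI33E (B : E3SAT n m) : HRC1 (Res3E n m) (Hos3E n m) where
  singles :=
    ((List.finRange m).map fun j => Res3E.Q j) ++
    ((List.finRange m).map fun j => Res3E.T j) ++
    ((List.finRange n).flatMap fun i =>
      (List.finRange 4).map fun r => Res3E.U i r 4)
  couples :=
    ((List.finRange n).flatMap fun i =>
      (List.finRange 4).map fun r => (Res3E.X i r, Res3E.K i r)) ++
    ((List.finRange m).flatMap fun j =>
      (List.finRange 3).map fun s =>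
        (Res3E.P j ⟨s.val, by have := s.isLt; omega⟩,
         Res3E.P j ⟨s.val + 3, by have := s.isLt; omega⟩)) ++
    ((List.finRange n).flatMap fun i =>
      (List.finRange 4).flatMap fun r =>
        [(Res3E.U i r 0, Res3E.U i r 1), (Res3E.U i r 2, Res3E.U i r 3)])
  singlePref := fun r => match r with
    | Res3E.Q j => [Hos3E.C j 0, Hos3E.C j 1, Hos3E.C j 2]
    | Res3E.T j => [Hos3E.Z j 2, Hos3E.Z j 3, Hos3E.Z j 4]
    | Res3E.U i r s => if s = 4 then [Hos3E.Y i r, Hos3E.Hh i r 0] else []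
    | _ => []
  couplePref := fun c => match c with
    | (Res3E.X i r, Res3E.K i' r') =>
        if i' = i ∧ r' = r then
          if r = 0 then
            [(Hos3E.Y i 0, Hos3E.L i 0), (cX B i 0, Hos3E.L i 1),
             (Hos3E.Y i 1, Hos3E.L i 1)]
          else if r = 1 then
            [(Hos3E.Y i 1, Hos3E.L i 1), (cX B i 1, Hos3E.L i 2),
             (Hos3E.Y i 2, Hos3E.L i 2)]
          else if r = 2 then
            [(Hos3E.Y i 3, Hos3E.L i 3), (cX B i 2, Hos3E.L i 2),
             (Hos3E.Y i 2, Hos3E.L i 2)]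
          else
            [(Hos3E.Y i 0, Hos3E.L i 0), (cX B i 3, Hos3E.L i 3),
             (Hos3E.Y i 3, Hos3E.L i 3)]
        else []
    | (Res3E.P j s, Res3E.P j' s') =>
        if hc : j' = j ∧ s.val < 3 ∧ s'.val = s.val + 3 then
          [(Hos3E.Z j 0, Hos3E.Z j 1),
           (Hos3E.C j ⟨s.val, hc.2.1⟩, Hos3E.Z j ⟨s.val + 2, by have := hc.2.1; omega⟩)]
        else []
    | (Res3E.U i r s, Res3E.U i' r' s') =>
        if i' = i ∧ r' = r then
          if s = 0 ∧ s' = 1 then [(Hos3E.Hh i r 0, Hos3E.Hh i r 1)]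
          else if s = 2 ∧ s' = 3 then
            [(Hos3E.Hh i r 0, Hos3E.Hh i r 3), (Hos3E.Hh i r 2, Hos3E.Hh i r 1)]
          else []
        else []
    | _ => []
  hospPref := fun hh => match hh with
    | Hos3E.Y i r =>
        (if r = 0 then [Res3E.X i 0, Res3E.X i 3]
         else if r = 1 then [Res3E.X i 1, Res3E.X i 0]
         else if r = 2 then [Res3E.X i 1, Res3E.X i 2]
         else [Res3E.X i 2, Res3E.X i 3]) ++ [Res3E.U i r 4]
    | Hos3E.L i r =>
        if r = 0 then [Res3E.K i 3, Res3E.K i 0]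
        else if r = 1 then [Res3E.K i 0, Res3E.K i 1]
        else if r = 2 then [Res3E.K i 2, Res3E.K i 1]
        else [Res3E.K i 3, Res3E.K i 2]
    | Hos3E.C j s =>
        [Res3E.P j ⟨s.val, by have := s.isLt; omega⟩, xOfC B j s, Res3E.Q j]
    | Hos3E.Z j r =>
        if r = 0 then [Res3E.P j 0, Res3E.P j 1, Res3E.P j 2]
        else if r = 1 then [Res3E.P j 5, Res3E.P j 4, Res3E.P j 3]
        else if r = 2 then [Res3E.P j 3, Res3E.T j]
        else if r = 3 then [Res3E.P j 4, Res3E.T j]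
        else [Res3E.P j 5, Res3E.T j]
    | Hos3E.Hh i r s =>
        if s = 0 then [Res3E.U i r 4, Res3E.U i r 0, Res3E.U i r 2]
        else if s = 1 then [Res3E.U i r 3, Res3E.U i r 1]
        else if s = 2 then [Res3E.U i r 2]
        else [Res3E.U i r 3]

namespace HRC1

/-- Resident `r` and hospital `h` are mutually acceptable in the instance `I`:
`h` occurs on `r`'s list (for a coupled resident, in the corresponding component
of some pair on the couple's joint list). -/
def Acceptable {R H : Type} (I : HRC1 R H) (r : R) (h : H) : Prop :=
  (r ∈ I.singles ∧ h ∈ I.singlePref r) ∨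
  (∃ c ∈ I.couples,
    (r = c.1 ∧ ∃ hp ∈ I.couplePref c, hp.1 = h) ∨
    (r = c.2 ∧ ∃ hp ∈ I.couplePref c, hp.2 = h))

end HRC1

/-- The resident set `R₁ = X ∪ {p_j^s : 1≤s≤3} ∪ Q ∪ {u^s : s ∈ {1,3,5}}`. -/
def R1set : Set (Res3E n m) := {r | match r with
  | Res3E.X _ _ => True
  | Res3E.P _ s => s.val < 3
  | Res3E.Q _ => True
  | Res3E.U _ _ s => s = 0 ∨ s = 2 ∨ s = 4
  | _ => False}

/-- The resident set `R₂ = K ∪ {p_j^s : 4≤s≤6} ∪ T ∪ {u^s : s ∈ {2,4}}`. -/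
def R2set : Set (Res3E n m) := {r | match r with
  | Res3E.K _ _ => True
  | Res3E.P _ s => 3 ≤ s.val
  | Res3E.T _ => True
  | Res3E.U _ _ s => s = 1 ∨ s = 3
  | _ => False}

/-- The hospital set `A₁ = Y ∪ {z_j^1} ∪ C' ∪ {h^s : s ∈ {1,3}}`. -/
def A1set : Set (Hos3E n m) := {h | match h with
  | Hos3E.Y _ _ => True
  | Hos3E.Z _ r => r = 0
  | Hos3E.C _ _ => True
  | Hos3E.Hh _ _ s => s = 0 ∨ s = 2
  | _ => False}

/-- The hospital set `A₂ = L ∪ {z_j^s : 2≤s≤5} ∪ {h^s : s ∈ {2,4}}`. -/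
def A2set : Set (Hos3E n m) := {h | match h with
  | Hos3E.L _ _ => True
  | Hos3E.Z _ r => 1 ≤ r.val
  | Hos3E.Hh _ _ s => s = 1 ∨ s = 3
  | _ => False}

/-!
Acceptability in an HRC instance is read off the preference lists, so it suffices to check
the lists of `I′₃₃(B)`: every single resident lists hospitals on its own side only, and every
couple has its first member in `R₁` and its second in `R₂`, with first components of its
joint list in `A₁` and second components in `A₂`.
-/

namespace HRC1

variable {R H : Type}

theorem acceptable_le (I : HRC1 R H) {S : R → H → Prop}
    (hsingle : ∀ r ∈ I.singles, ∀ h ∈ I.singlePref r, S r h)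
    (hcouple : ∀ c ∈ I.couples, ∀ hp ∈ I.couplePref c, S c.1 hp.1 ∧ S c.2 hp.2) :
    I.Acceptable ≤ S := by
  rintro r h (⟨hr, hh⟩ | ⟨c, hc, ⟨rfl, hp, hp_mem, rfl⟩ | ⟨rfl, hp, hp_mem, rfl⟩⟩)
  · exact hsingle r hr h hh
  · exact (hcouple c hc hp hp_mem).1
  · exact (hcouple c hc hp hp_mem).2

end HRC1

theorem R2set_eq_compl_R1set : (R2set : Set (Res3E n m)) = R1setᶜ := by
  ext r
  cases r <;> simp [R1set, R2set]
  case U => omega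

theorem A2set_eq_compl_A1set : (A2set : Set (Hos3E n m)) = A1setᶜ := by
  ext h
  cases h <;> simp [A1set, A2set] <;> omega

theorem instI33E_singlePref_side (B : E3SAT n m) :
    ∀ r ∈ (instI33E B).singles, ∀ h ∈ (instI33E B).singlePref r,
      (r ∈ R1set ∧ h ∈ A1set) ∨ (r ∈ R2set ∧ h ∈ A2set) := by
  intro r hr h hh
  simp only [instI33E, List.mem_append, List.mem_map, List.mem_flatMap,
    List.mem_finRange, true_and] at hr
  rcases hr with (⟨j, rfl⟩ | ⟨j, rfl⟩) | ⟨i, r, rfl⟩ <;> simp [instI33E] at hh <;>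
    rcases hh with rfl | rfl | rfl <;> simp [R1set, R2set, A1set, A2set]

theorem instI33E_couplePref_side (B : E3SAT n m) :
    ∀ c ∈ (instI33E B).couples, ∀ hp ∈ (instI33E B).couplePref c,
      (c.1 ∈ R1set ∧ hp.1 ∈ A1set) ∧ (c.2 ∈ R2set ∧ hp.2 ∈ A2set) := by
  intro c hc
  simp only [instI33E, List.mem_append, List.mem_map, List.mem_flatMap,
    List.mem_finRange, List.mem_cons, List.not_mem_nil, or_false, true_and] at hc
  rcases hc with (⟨i, r, rfl⟩ | ⟨j, s, rfl⟩) | ⟨i, r, rfl | rfl⟩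
  · fin_cases r <;> simp [instI33E, cX, R1set, R2set, A1set, A2set]
  all_goals simp [instI33E, R1set, R2set, A1set, A2set]

/-- The extended instance `I′₃₃(B)` is a dual market: `R₁, R₂` partition its residents,
`A₁, A₂` partition its hospitals, and every mutually acceptable resident–hospital pair
lies in `R₁ × A₁` or in `R₂ × A₂`. -/
theorem instI33E_dual_market {n m : ℕ} (B : E3SAT n m) :
    (R1set ∪ R2set = (Set.univ : Set (Res3E n m))) ∧ Disjoint (R1set (n := n) (m := m)) R2set ∧
    (A1set ∪ A2set = (Set.univ : Set (Hos3E n m))) ∧ Disjoint (A1set (n := n) (m := m)) A2set ∧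
    (∀ (r : Res3E n m) (h : Hos3E n m), (instI33E B).Acceptable r h →
      (r ∈ R1set ∧ h ∈ A1set) ∨ (r ∈ R2set ∧ h ∈ A2set)) := by
  have hR : IsCompl (R1set : Set (Res3E n m)) R2set := R2set_eq_compl_R1set ▸ isCompl_compl
  have hA : IsCompl (A1set : Set (Hos3E n m)) A2set := A2set_eq_compl_A1set ▸ isCompl_compl
  refine ⟨hR.sup_eq_top, hR.disjoint, hA.sup_eq_top, hA.disjoint, ?_⟩
  refine (instI33E B).acceptable_le (instI33E_singlePref_side B) fun c hc hp hp_mem => ?_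
  obtain ⟨side₁, side₂⟩ := instI33E_couplePref_side B c hc hp hp_mem
  exact ⟨Or.inl side₁, Or.inr side₂⟩
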